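/- For the DFA baba with states {A, B, C, D, F} over {a, b}, start A, finals {F}, and transitions A→A on a, A→B on b, B→C on a, B→B on b, C→A on a, C→D on b, D→F on a, D→B on b, F→F on a, F→F on b: the DFA accepts a word w if and only if [b, a, b, a] occurs as a contiguous sublist (infix) of w. -/
import Mathlib

inductive Letter | a | b
deriving DecidableEq

inductive St | A | B | C | D | F
deriving DecidableEq

open Letter St in
def step : St → Letter → St
  | A, a => A
  | A, b => B
  | B, a => C
  | B, b => B
  | C, a => A
  | C, b => D
  | D, a => F
  | D, b => B
  | F, _ => F

def run (q : St) (w : List Letter) : St := w.foldl step q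

lemma suffix_snoc {α : Type*} (l : List α) (y x : α) (w : List α) :
    l ++ [y] <:+ w ++ [x] ↔ l <:+ w ∧ y = x := by
  constructor
  · rintro ⟨t, ht⟩
    rw [← List.append_assoc] at ht
    obtain ⟨h1, h2⟩ := List.append_inj' ht rfl
    simp at h2
    exact ⟨⟨t, h1⟩, h2⟩
  · rintro ⟨⟨t, ht⟩, rfl⟩
    exact ⟨t, by rw [← List.append_assoc, ht]⟩

lemma infix_snoc {α : Type*} (p : List α) (x : α) (w : List α) :
    p <:+: w ++ [x] ↔ p <:+: w ∨ p <:+ w ++ [x] := by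
  constructor
  · rintro ⟨u, v, huv⟩
    rcases List.eq_nil_or_concat v with rfl | ⟨v', x', rfl⟩
    · right; exact ⟨u, by simpa using huv⟩
    · left
      rw [List.concat_eq_append, ← List.append_assoc] at huv
      obtain ⟨h1, h2⟩ := List.append_inj' huv rfl
      exact ⟨u, v', h1⟩
  · rintro (h | h)
    · obtain ⟨u, v, rfl⟩ := h
      exact ⟨u, v ++ [x], by simp⟩
    · exact h.isInfix

open Letter St

lemma run_snoc (q : St) (w : List Letter) (x : Letter) :
    run q (w ++ [x]) = step (run q w) x := by
  simp [run]

lemma key (w : List Letter) :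
    (run A w = F ↔ [b,a,b,a] <:+: w) ∧
    (run A w = D ↔ ¬ ([b,a,b,a] <:+: w) ∧ [b,a,b] <:+ w) ∧
    (run A w = C ↔ ¬ ([b,a,b,a] <:+: w) ∧ [b,a] <:+ w) ∧
    (run A w = B ↔ ¬ ([b,a,b,a] <:+: w) ∧ [b] <:+ w ∧ ¬ ([b,a,b] <:+ w)) := by
  induction w using List.reverseRecOn with
  | nil =>
    refine ⟨?_, ?_, ?_, ?_⟩ <;>
      simp [run, List.suffix_nil, List.infix_iff_prefix_suffix]
  | append_singleton w x IH =>
    obtain ⟨hF, hD, hC, hB⟩ := IH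
    have e4 : ∀ y : Letter, ([b,a,b,a] <:+ w ++ [y]) ↔ ([b,a,b] <:+ w ∧ a = y) :=
      fun y => suffix_snoc [b,a,b] a y w
    have e3 : ∀ y : Letter, ([b,a,b] <:+ w ++ [y]) ↔ ([b,a] <:+ w ∧ b = y) :=
      fun y => suffix_snoc [b,a] b y w
    have e2 : ∀ y : Letter, ([b,a] <:+ w ++ [y]) ↔ ([b] <:+ w ∧ a = y) :=
      fun y => suffix_snoc [b] a y w
    have e1 : ∀ y : Letter, ([b] <:+ w ++ [y]) ↔ (b = y) := by
      intro y
      have := suffix_snoc ([] : List Letter) b y w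
      simpa using this
    rw [run_snoc]
    cases hq : run A w <;> rw [hq] at hF hD hC hB <;> cases x <;>
      simp only [infix_snoc, e1, e2, e3, e4, step] <;>
      simp_all

theorem stmt6 (w : List Letter) :
    run St.A w = St.F ↔ [Letter.b, Letter.a, Letter.b, Letter.a] <:+: w :=
  (key w).1
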